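/- Let c, d, e be small categories, let F : (d ⥤ Type) ⥤ (c ⥤ Type) be familial with positions copresheaf F(1) and arities F[I] ∈ d ⥤ Type, and let G : (e ⥤ Type) ⥤ (d ⥤ Type) be familial with positions copresheaf G(1) ∈ d ⥤ Type and arities G[J] ∈ e ⥤ Type. Then the composite functor F ∘ G : (e ⥤ Type) ⥤ (c ⥤ Type) (first apply G, then F) is familial, with an isomorphism, natural in X and C: (F(G(X)))(C) ≅ Σ over pairs (I ∈ F(1)(C), J : F[I] ⟶ G(1) a morphism of d-copresheaves) of Hom_{e ⥤ Type}(colim_{z ∈ el(F[I])} G[J(z)], X), where the colimit is indexed by the category of elements of F[I]. -/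

import Mathlib

namespace Fam
open CategoryTheory Opposite Limits
private lemma sigmaExt {α : Type} {β : α → Type} {a a' : α} {b : β a} {b' : β a'}
    (h : a = a') (h' : HEq b b') : (⟨a, b⟩ : Σ x, β x) = ⟨a', b'⟩ := by
  subst h; cases h'; rfl
variable {c d : Type} [SmallCategory c] [SmallCategory d]
def elHom (pos : c ⥤ Type) {C C' : c} (f : C ⟶ C') (I : pos.obj C) :
    pos.elementsMk C I ⟶ pos.elementsMk C' (pos.map f I) :=
  CategoryOfElements.homMk _ _ f rfl
lemma eqToHom_val {pos : c ⥤ Type} {x y : pos.Elements} (E : x = y) :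
    (eqToHom E).val = eqToHom (congrArg Sigma.fst E) := by
  subst E; simp
@[simps]
def famApply (pos : c ⥤ Type) (ar : pos.Elementsᵒᵖ ⥤ d ⥤ Type) :
    (d ⥤ Type) ⥤ c ⥤ Type where
  obj X :=
    { obj := fun C => Σ I : pos.obj C, ar.obj (op (pos.elementsMk C I)) ⟶ X
      map := fun {C C'} f => TypeCat.ofHom fun x => ⟨pos.map f x.1, ar.map (elHom pos f x.1).op ≫ x.2⟩
      map_id := by
        intro C
        refine ConcreteCategory.hom_ext _ _ fun x => ?_
        obtain ⟨I, g⟩ := x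
        have h : pos.map (𝟙 C) I = I := by simp
        have hE : pos.elementsMk C I = pos.elementsMk C (pos.map (𝟙 C) I) := by rw [h]
        have he : elHom pos (𝟙 C) I = eqToHom hE := by
          apply CategoryOfElements.ext
          rw [eqToHom_val]
          simp [elHom]
        dsimp
        refine sigmaExt h ?_
        rw [he]
        simp [eqToHom_op, eqToHom_map]
      map_comp := by
        intro C C' C'' f g
        refine ConcreteCategory.hom_ext _ _ fun x => ?_
        obtain ⟨I, u⟩ := x
        have h : pos.map (f ≫ g) I = pos.map g (pos.map f I) := by simp
        have hE : pos.elementsMk C'' (pos.map (f ≫ g) I)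
            = pos.elementsMk C'' (pos.map g (pos.map f I)) := by rw [h]
        have hcomp : elHom pos f I ≫ elHom pos g (pos.map f I)
            = elHom pos (f ≫ g) I ≫ eqToHom hE := by
          apply CategoryOfElements.ext
          rw [CategoryOfElements.comp_val, CategoryOfElements.comp_val, eqToHom_val]
          simp [elHom]
        dsimp
        refine sigmaExt h ?_
        rw [← Category.assoc, ← ar.map_comp, ← op_comp, hcomp, op_comp, ar.map_comp,
          Category.assoc]
        simp [eqToHom_op, eqToHom_map] }
  map {X Y} t :=
    { app := fun C => TypeCat.ofHom fun x => ⟨x.1, x.2 ≫ t⟩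
      naturality := by
        intro C C' f
        refine ConcreteCategory.hom_ext _ _ fun x => ?_
        dsimp
        rw [Category.assoc] }
  map_id := by
    intro X
    apply NatTrans.ext
    funext C; refine ConcreteCategory.hom_ext _ _ fun x => ?_
    dsimp
    rw [Category.comp_id]
  map_comp := by
    intro X Y Z s t
    apply NatTrans.ext
    funext C; refine ConcreteCategory.hom_ext _ _ fun x => ?_
    dsimp
    rw [Category.assoc]

/-- The unit exhibiting `famApply pos (ar ⋙ G)` as the right coclosure `⌈F/G⌉`,
i.e. the left Kan extension of the familial functor `F = famApply pos ar` along `G`. -/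
def coclosureUnit {e : Type} [SmallCategory e] (pos : c ⥤ Type)
    (ar : pos.Elementsᵒᵖ ⥤ e ⥤ Type) (G : (e ⥤ Type) ⥤ d ⥤ Type) :
    famApply pos ar ⟶ G ⋙ famApply pos (ar ⋙ G) where
  app X :=
    { app := fun C => TypeCat.ofHom fun x => ⟨x.1, G.map x.2⟩
      naturality := by
        intro C C' f
        refine ConcreteCategory.hom_ext _ _ fun x => ?_
        show (⟨pos.map f x.1, G.map (ar.map (elHom pos f x.1).op ≫ x.2)⟩ :
            Σ I : pos.obj C', (ar ⋙ G).obj (op (pos.elementsMk C' I)) ⟶ G.obj X)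
          = ⟨pos.map f x.1, G.map (ar.map (elHom pos f x.1).op) ≫ G.map x.2⟩
        rw [G.map_comp] }
  naturality := by
    intro X Y t
    apply NatTrans.ext
    funext C; refine ConcreteCategory.hom_ext _ _ fun x => ?_
    show (⟨x.1, G.map (x.2 ≫ t)⟩ :
        Σ I : pos.obj C, (ar ⋙ G).obj (op (pos.elementsMk C I)) ⟶ G.obj Y)
      = ⟨x.1, G.map x.2 ≫ G.map t⟩
    rw [G.map_comp]

section Statement8

variable {c d e : Type} [SmallCategory c] [SmallCategory d] [SmallCategory e]

/-- Positions of the composite `F ∘ G` of familial functors: pairs of a position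
`I ∈ F(1)(C)` and a morphism of `d`-copresheaves `J : F[I] ⟶ G(1)`; i.e. the copresheaf
`F(G(1)) = (famApply posF arF).obj posG`. -/
def compPos (posF : c ⥤ Type) (arF : posF.Elementsᵒᵖ ⥤ d ⥤ Type) (posG : d ⥤ Type) :
    c ⥤ Type :=
  (famApply posF arF).obj posG

/-- The diagram `z ↦ G[J(z)]`, indexed by (the opposite of) the category of elements of the
arity `F[I]`, whose colimit is the arity of the composite `F ∘ G` at the position `(I, J)`. -/
def compDiagram {posF : c ⥤ Type} (arF : posF.Elementsᵒᵖ ⥤ d ⥤ Type) {posG : d ⥤ Type}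
    (arG : posG.Elementsᵒᵖ ⥤ e ⥤ Type) (el : (compPos posF arF posG).Elements) :
    ((arF.obj (op (posF.elementsMk el.1 el.2.1))).Elements)ᵒᵖ ⥤ e ⥤ Type :=
  (CategoryOfElements.map el.2.2).op ⋙ arG

/-!
A map from an arity `F[I]` into `G(X) = Σ_J Hom(G[J], X)` is the same as its positions part
`J : F[I] ⟶ G(1)` together with a cocone with vertex `X` under `z ↦ G[J z]`, i.e. a map
`colim_{z ∈ el F[I]} G[J z] ⟶ X`. In other words, `G` lifted to the slice over `G(1)` is a right
adjoint, whose left adjoint sends `(A, J)` to that colimit; and `F ∘ G` is familial for any such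
local right adjoint `G`, with arity at `(I, J)` the left adjoint applied to `(F[I], J)`.
-/

section Familial

variable (pos : c ⥤ Type) (ar : pos.Elementsᵒᵖ ⥤ d ⥤ Type)

lemma famApply_obj_map_val {X : d ⥤ Type} {C C' : c} {I : pos.obj C} {I' : pos.obj C'}
    (u : pos.elementsMk C I ⟶ pos.elementsMk C' I') (g : ar.obj (op (pos.elementsMk C I)) ⟶ X) :
    ((famApply pos ar).obj X).map u.val ⟨I, g⟩ = ⟨I', ar.map u.op ≫ g⟩ := by
  obtain ⟨f : C ⟶ C', hf : pos.map f I = I'⟩ := u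
  subst hf
  rfl

lemma famApply_obj_map_val_eq_mk_iff {X : d ⥤ Type} {C C' : c} {I : pos.obj C}
    {I' : pos.obj C'} (u : pos.elementsMk C I ⟶ pos.elementsMk C' I')
    (g : ar.obj (op (pos.elementsMk C I)) ⟶ X) (g' : ar.obj (op (pos.elementsMk C' I')) ⟶ X) :
    ((famApply pos ar).obj X).map u.val ⟨I, g⟩ = ⟨I', g'⟩ ↔ ar.map u.op ≫ g = g' := by
  rw [famApply_obj_map_val]
  exact sigma_mk_injective.eq_iff

def famApplyProj (X : d ⥤ Type) : (famApply pos ar).obj X ⟶ pos where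
  app C := TypeCat.ofHom Sigma.fst

def famApplyOver : (d ⥤ Type) ⥤ Over pos where
  obj X := Over.mk (famApplyProj pos ar X)
  map t := Over.homMk ((famApply pos ar).map t)

def famApplyDiagram (A : Over pos) : A.left.Elementsᵒᵖ ⥤ d ⥤ Type :=
  (CategoryOfElements.map A.hom).op ⋙ ar

def famApplyElementsToOver (P : d ⥤ Type) :
    ((famApply pos ar).obj P).Elementsᵒᵖ ⥤ Over P where
  obj x := Over.mk x.unop.2.2
  map m := Over.homMk (ar.map ((CategoryOfElements.map (famApplyProj pos ar P)).map m.unop).op)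
    ((famApply_obj_map_val_eq_mk_iff pos ar _ _ _).1 m.unop.property)
  map_id _ := by ext : 1; exact ar.map_id _
  map_comp _ _ := by
    ext : 1
    simp only [unop_comp, Functor.map_comp, op_comp]
    exact ar.map_comp _ _

end Familial

section Cocone

variable {pos : c ⥤ Type} {ar : pos.Elementsᵒᵖ ⥤ d ⥤ Type} {A : Over pos} {X : d ⥤ Type}

def famApplyHomOfCocone (τ : famApplyDiagram pos ar A ⟶ (Functor.const _).obj X) :
    A.left ⟶ (famApply pos ar).obj X where
  app C := TypeCat.ofHom fun a => ⟨A.hom.app C a, τ.app (op (A.left.elementsMk C a))⟩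
  naturality C C' f := by
    ext a
    symm
    refine (famApply_obj_map_val_eq_mk_iff pos ar
      ((CategoryOfElements.map A.hom).map (elHom A.left f a)) _ _).2 ?_
    exact (τ.naturality (elHom A.left f a).op).trans (Category.comp_id _)

lemma famApplyOver_hom_left_app_fst (ψ : A ⟶ (famApplyOver pos ar).obj X) {C : c}
    (a : A.left.obj C) : (ψ.left.app C a).1 = A.hom.app C a := by
  exact ConcreteCategory.congr_hom (NatTrans.congr_app (Over.w ψ) C) a

/-- The position of `ψ` at `z` agrees with `A.hom z` only propositionally, so the arity
component is transported along the identity morphism between the two elements. -/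
def famApplyCoconeApp (ψ : A ⟶ (famApplyOver pos ar).obj X) (z : A.left.Elements) :
    ar.obj (op ((CategoryOfElements.map A.hom).obj z)) ⟶ X :=
  ar.map (CategoryOfElements.homMk (pos.elementsMk z.1 (ψ.left.app _ z.2).1)
    ((CategoryOfElements.map A.hom).obj z) (𝟙 _)
    ((pos.map_id_apply _ _).trans (famApplyOver_hom_left_app_fst ψ z.2))).op ≫
      (ψ.left.app _ z.2).2

lemma mk_famApplyCoconeApp (ψ : A ⟶ (famApplyOver pos ar).obj X) (z : A.left.Elements) :
    (⟨A.hom.app z.1 z.2, famApplyCoconeApp ψ z⟩ : ((famApply pos ar).obj X).obj z.1) =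
      ψ.left.app z.1 z.2 :=
  (famApply_obj_map_val pos ar _ (ψ.left.app z.1 z.2).2).symm.trans
    (((famApply pos ar).obj X).map_id_apply _ _)

def famApplyCoconeOfHom (ψ : A ⟶ (famApplyOver pos ar).obj X) :
    famApplyDiagram pos ar A ⟶ (Functor.const _).obj X where
  app z := famApplyCoconeApp ψ z.unop
  naturality z z' g := by
    have key : ((famApply pos ar).obj X).map g.unop.val (ψ.left.app _ z'.unop.2) =
        ψ.left.app _ z.unop.2 :=
      (NatTrans.naturality_apply ψ.left g.unop.val _).symm.trans
        (congrArg (ψ.left.app _) g.unop.property)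
    rw [← mk_famApplyCoconeApp, ← mk_famApplyCoconeApp] at key
    exact ((famApply_obj_map_val_eq_mk_iff pos ar ((CategoryOfElements.map A.hom).map g.unop)
      _ _).1 key).trans (Category.comp_id _).symm

end Cocone

section LeftAdjoint

variable (pos : c ⥤ Type) (ar : pos.Elementsᵒᵖ ⥤ d ⥤ Type)

def famApplyOverHomEquiv (A : Over pos) (X : d ⥤ Type) :
    (famApplyDiagram pos ar A ⟶ (Functor.const _).obj X) ≃
      (A ⟶ (famApplyOver pos ar).obj X) where
  toFun τ := Over.homMk (famApplyHomOfCocone τ)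
  invFun := famApplyCoconeOfHom
  left_inv τ := by
    ext z : 2
    apply sigma_mk_injective (β := fun I => ar.obj (op (pos.elementsMk z.unop.1 I)) ⟶ X)
    exact mk_famApplyCoconeApp _ z.unop
  right_inv ψ := by
    ext C a
    exact mk_famApplyCoconeApp ψ ⟨C, a⟩

noncomputable def famApplyOverColimitHomEquiv (A : Over pos) (X : d ⥤ Type) :
    (colimit (famApplyDiagram pos ar A) ⟶ X) ≃ (A ⟶ (famApplyOver pos ar).obj X) :=
  (colimit.isColimit _).homEquiv.trans (famApplyOverHomEquiv pos ar A X)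

lemma famApplyOverColimitHomEquiv_comp (A : Over pos) {X X' : d ⥤ Type} (g : X ⟶ X')
    (h : colimit (famApplyDiagram pos ar A) ⟶ X) :
    famApplyOverColimitHomEquiv pos ar A X' (h ≫ g) =
      famApplyOverColimitHomEquiv pos ar A X h ≫ (famApplyOver pos ar).map g := by
  ext C a
  rfl

noncomputable def famApplyOverLeftAdjoint : Over pos ⥤ d ⥤ Type :=
  Adjunction.leftAdjointOfEquiv _ fun A _ _ => famApplyOverColimitHomEquiv_comp pos ar A

noncomputable def famApplyOverAdjunction : famApplyOverLeftAdjoint pos ar ⊣ famApplyOver pos ar :=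
  Adjunction.adjunctionOfEquivLeft _ _

end LeftAdjoint

lemma Over.congr_of_left_eq {𝒞 : Type*} [Category 𝒞] {B P : 𝒞} {Y : Over P} {T : Sort*}
    (F : ∀ J : B ⟶ P, (Over.mk J ⟶ Y) → T) {J J' : B ⟶ P} {g : Over.mk J ⟶ Y}
    {g' : Over.mk J' ⟶ Y} (h : g.left = g'.left) : F J g = F J' g' := by
  obtain rfl : J = J' := (Over.w g).symm.trans (h ▸ Over.w g')
  obtain rfl : g = g' := Over.OverMorphism.ext h
  rfl

def Over.homEquivSigma {𝒞 : Type*} [Category 𝒞] {P : 𝒞} (B : 𝒞) (Y : Over P) :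
    (B ⟶ Y.left) ≃ Σ J : B ⟶ P, (Over.mk J ⟶ Y) where
  toFun φ := ⟨φ ≫ Y.hom, Over.homMk φ⟩
  invFun g := g.2.left
  left_inv φ := rfl
  right_inv g :=
    Over.congr_of_left_eq (fun J g => (⟨J, g⟩ : Σ J : B ⟶ P, (Over.mk J ⟶ Y))) rfl

section Composite

variable {pos : c ⥤ Type} {ar : pos.Elementsᵒᵖ ⥤ d ⥤ Type} {P : d ⥤ Type}
  {L : Over P ⥤ e ⥤ Type} {R : (e ⥤ Type) ⥤ Over P}

def famApplyCompEquiv (adj : L ⊣ R) (X : e ⥤ Type) (C : c) :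
    ((famApply pos ar).obj (R.obj X).left).obj C ≃
      ((famApply ((famApply pos ar).obj P) (famApplyElementsToOver pos ar P ⋙ L)).obj X).obj C :=
  (Equiv.sigmaCongrRight fun _ => Over.homEquivSigma _ _).trans <|
    (Equiv.sigmaAssoc _).symm.trans <|
      Equiv.sigmaCongrRight fun _ => (adj.homEquiv _ _).symm

noncomputable def famApplyCompIso (adj : L ⊣ R) :
    (R ⋙ Over.forget P) ⋙ famApply pos ar ≅
      famApply ((famApply pos ar).obj P) (famApplyElementsToOver pos ar P ⋙ L) :=
  NatIso.ofComponents
    (fun X => NatIso.ofComponents (fun C => (famApplyCompEquiv adj X C).toIso) fun f => by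
      ext ⟨I, φ⟩
      change famApplyCompEquiv adj X _ (((famApply pos ar).obj (R.obj X).left).map f ⟨I, φ⟩) =
        ((famApply _ (famApplyElementsToOver pos ar P ⋙ L)).obj X).map f
          (famApplyCompEquiv adj X _ ⟨I, φ⟩)
      refine (Over.congr_of_left_eq
        (fun J g => (⟨⟨pos.map f I, J⟩, (adj.homEquiv _ _).symm g⟩ :
          ((famApply _ (famApplyElementsToOver pos ar P ⋙ L)).obj X).obj _))
        (g' := (famApplyElementsToOver pos ar P).map
          (elHom ((famApply pos ar).obj P) f ⟨I, φ ≫ (R.obj X).hom⟩).op ≫ Over.homMk φ)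
        -- both morphisms of elements of `pos` have underlying map `f`
        rfl).trans ?_
      exact congrArg (Sigma.mk _) (adj.homEquiv_naturality_left_symm _ _))
    fun t => by
      ext C ⟨I, φ⟩
      change famApplyCompEquiv adj _ C (((famApply pos ar).map (R.map t).left).app C ⟨I, φ⟩) =
        ((famApply _ (famApplyElementsToOver pos ar P ⋙ L)).map t).app C
          (famApplyCompEquiv adj _ C ⟨I, φ⟩)
      refine (Over.congr_of_left_eq
        (fun J g => (⟨⟨I, J⟩, (adj.homEquiv _ _).symm g⟩ :
          ((famApply _ (famApplyElementsToOver pos ar P ⋙ L)).obj _).obj C))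
        (J := (φ ≫ (R.map t).left) ≫ (R.obj _).hom) (J' := φ ≫ (R.obj _).hom)
        (g := Over.homMk (φ ≫ (R.map t).left) rfl) (g' := Over.homMk φ rfl ≫ R.map t)
        rfl).trans ?_
      exact congrArg (Sigma.mk _) (adj.homEquiv_naturality_right_symm _ _)

end Composite

/-- The composite `G ⋙ F` ("first `G`, then `F`") of familial functors
`F : (d ⥤ Type) ⥤ (c ⥤ Type)` and `G : (e ⥤ Type) ⥤ (d ⥤ Type)` is familial, with positions
copresheaf `F(G(1))` — whose elements over `C` are pairs `(I ∈ F(1)(C), J : F[I] ⟶ G(1))` —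
and with arity at `(I, J)` the colimit `colim_{z ∈ el(F[I])} G[J(z)]`; so that, naturally in
`X` and `C`,
`F(G(X))(C) ≅ Σ_{(I, J)} Hom_{e ⥤ Type}(colim_{z ∈ el(F[I])} G[J(z)], X)`. -/
theorem comp_familial
    (F : (d ⥤ Type) ⥤ c ⥤ Type) (posF : c ⥤ Type)
    (arF : posF.Elementsᵒᵖ ⥤ d ⥤ Type) (eF : famApply posF arF ≅ F)
    (G : (e ⥤ Type) ⥤ d ⥤ Type) (posG : d ⥤ Type)
    (arG : posG.Elementsᵒᵖ ⥤ e ⥤ Type) (eG : famApply posG arG ≅ G) :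
    ∃ arComp : (compPos posF arF posG).Elementsᵒᵖ ⥤ e ⥤ Type,
      (∀ el : (compPos posF arF posG).Elements,
        Nonempty (arComp.obj (op el) ≅ Limits.colimit (compDiagram arF arG el))) ∧
      Nonempty (G ⋙ F ≅ famApply (compPos posF arF posG) arComp) :=
  ⟨famApplyElementsToOver posF arF posG ⋙ famApplyOverLeftAdjoint posG arG,
    fun _ => ⟨Iso.refl _⟩,
    ⟨Functor.isoWhiskerRight eG.symm F ≪≫
      Functor.isoWhiskerLeft (famApply posG arG) eF.symm ≪≫
      famApplyCompIso (famApplyOverAdjunction posG arG)⟩⟩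

end Statement8

end Fam
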